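/- arXiv:0911.3863 — 9 statements merged into one kernel-verified Lean document; each statement's English description precedes it below -/
import Mathlib

section
/- Let V be a finite-dimensional complex vector space, W a finite-dimensional complex vector space, N ∈ End(W) nilpotent, Q : W → V and P : V → W linear maps. Suppose for every N-invariant subspace Y ⊆ W: (i) if Q(Y) = 0 then Y = 0, and (ii) if Im P ⊆ Y then Y = W. Then this holds if and only if Ker Q ∩ Ker N = 0 and Im P + Im N = W. -/
/-!
Both conditions are tested on a single `N`-invariant subspace: `Ker Q ∩ Ker N` in the first
case, `Im P + Im N` in the second. Conversely, for nilpotent `N` a nonzero invariant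
subspace meets `Ker N`, and an invariant subspace `Y` with `Y + Im N = W` satisfies
`Y + Im N ^ k = W` for every `k`, hence is all of `W`.
-/

open LinearMap

namespace Module.End

variable {R M : Type*} [Ring R] [AddCommGroup M] [Module R M] {N : M →ₗ[R] M}
  {Y : Submodule R M}

theorem eq_bot_of_inf_ker_eq_bot (hN : IsNilpotent N) (hY : Y.map N ≤ Y)
    (h : Y ⊓ ker N = ⊥) : Y = ⊥ := by
  obtain ⟨n, hn⟩ := hN
  have killed : ∀ k, ∀ y ∈ Y, (N ^ k) y = 0 → y = 0 := by
    intro k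
    induction k with
    | zero => simp
    | succ k ih =>
      intro y hy hky
      have hNy : N y = 0 :=
        ih (N y) (hY (Submodule.mem_map_of_mem hy)) (by rwa [← mul_apply, ← pow_succ])
      have hy' : y ∈ Y ⊓ ker N := ⟨hy, hNy⟩
      simpa [h] using hy'
  exact eq_bot_iff.mpr fun y hy => (Submodule.mem_bot R).mpr (killed n y hy (by simp [hn]))

theorem eq_top_of_sup_range_eq_top (hN : IsNilpotent N) (hY : Y.map N ≤ Y)
    (h : Y ⊔ range N = ⊤) : Y = ⊤ := by
  obtain ⟨n, hn⟩ := hN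
  have spans : ∀ k, Y ⊔ range (N ^ k) = ⊤ := by
    intro k
    induction k with
    | zero => rw [pow_zero, one_eq_id, range_id, sup_top_eq]
    | succ k ih =>
      refine top_unique ?_
      calc ⊤ = Y ⊔ (⊤ : Submodule R M).map N := by rw [← range_eq_map, h]
        _ = Y ⊔ (Y.map N ⊔ range (N ^ (k + 1))) := by
          rw [← ih, Submodule.map_sup, pow_succ', mul_eq_comp, range_comp]
        _ ≤ Y ⊔ range (N ^ (k + 1)) := by
          rw [← sup_assoc, sup_eq_left.mpr hY]
  simpa [hn] using spans n

end Module.End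

open Module.End in
theorem stmt0_general
    (V W : Type*) [AddCommGroup V] [Module ℂ V]
    [AddCommGroup W] [Module ℂ W]
    (N : W →ₗ[ℂ] W) (hN : IsNilpotent N) (Q : W →ₗ[ℂ] V) (P : V →ₗ[ℂ] W) :
    ((∀ Y : Submodule ℂ W, Y.map N ≤ Y → Y.map Q = ⊥ → Y = ⊥) ∧
      (∀ Y : Submodule ℂ W, Y.map N ≤ Y → LinearMap.range P ≤ Y → Y = ⊤)) ↔
    (LinearMap.ker Q ⊓ LinearMap.ker N = ⊥ ∧
      LinearMap.range P ⊔ LinearMap.range N = ⊤) := by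
  constructor
  · rintro ⟨stable_bot, stable_top⟩
    refine ⟨stable_bot _ ?_ (le_ker_iff_map.mp inf_le_left),
      stable_top _ (map_le_range.trans le_sup_right) le_sup_left⟩
    rw [le_ker_iff_map.mp inf_le_right]
    exact bot_le
  · rintro ⟨hker, hrange⟩
    refine ⟨fun Y hY hQ => eq_bot_of_inf_ker_eq_bot hN hY ?_,
      fun Y hY hP => eq_top_of_sup_range_eq_top hN hY ?_⟩
    · exact eq_bot_mono (inf_le_inf_right _ (le_ker_iff_map.mpr hQ)) hker
    · exact top_unique (hrange ▸ sup_le_sup_right hP _)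

/-- a datum `(V,W,N,Q,P)` with `N` nilpotent is stable (every `N`-invariant
subspace `Y ⊆ W` with `Q(Y) = 0` is zero, and every `N`-invariant subspace containing
`Im P` is all of `W`) iff `Ker Q ∩ Ker N = 0` and `Im P + Im N = W`. -/
theorem stmt0
    (V W : Type*) [AddCommGroup V] [Module ℂ V] [FiniteDimensional ℂ V]
    [AddCommGroup W] [Module ℂ W] [FiniteDimensional ℂ W]
    (N : W →ₗ[ℂ] W) (hN : IsNilpotent N) (Q : W →ₗ[ℂ] V) (P : V →ₗ[ℂ] W) :
    ((∀ Y : Submodule ℂ W, Y.map N ≤ Y → Y.map Q = ⊥ → Y = ⊥) ∧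
      (∀ Y : Submodule ℂ W, Y.map N ≤ Y → LinearMap.range P ≤ Y → Y = ⊤)) ↔
    (LinearMap.ker Q ⊓ LinearMap.ker N = ⊥ ∧
      LinearMap.range P ⊔ LinearMap.range N = ⊤) :=
  stmt0_general V W N hN Q P
end

section
/- Let V, W be finite-dimensional complex vector spaces, V ≠ 0, and let N ∈ End(W) be nilpotent. Suppose Q : W → V and P : V → W satisfy: Ker Q ∩ Ker N = 0 and Im P + Im N = W. If b ∈ GL(W) commutes with N and satisfies Q ∘ b⁻¹ = Q and b ∘ P = P, then b = id_W. -/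
/-!
Put `c = b - 1`. It commutes with `N` and kills `Im P`, so `Im P + Im N = W` gives
`Im c = c (Im N) = N (Im c)`. A subspace mapped onto itself by a nilpotent map is zero,
hence `c = 0`.
-/

theorem Submodule.eq_bot_of_le_map_of_isNilpotent {R M : Type*} [Semiring R] [AddCommMonoid M]
    [Module R M] {N : Module.End R M} (hN : IsNilpotent N) {S : Submodule R M}
    (hS : S ≤ S.map N) : S = ⊥ := by
  obtain ⟨k, hk⟩ := hN
  have hpow : ∀ n : ℕ, S ≤ S.map (N ^ n) := by
    intro n
    induction n with
    | zero => rw [pow_zero, Module.End.one_eq_id, Submodule.map_id]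
    | succ n ih =>
      calc S ≤ S.map N := hS
        _ ≤ (S.map (N ^ n)).map N := Submodule.map_mono ih
        _ = S.map (N ^ (n + 1)) := by rw [← Submodule.map_comp, pow_succ']; rfl
  simpa [hk] using hpow k

theorem LinearMap.eq_zero_of_commute_of_comp_eq_zero {R M V : Type*} [Semiring R]
    [AddCommMonoid M] [Module R M] [AddCommMonoid V] [Module R V]
    {N c : Module.End R M} (hN : IsNilpotent N) (hcN : Commute c N) {P : V →ₗ[R] M}
    (hcP : c ∘ₗ P = 0) (hPN : range P ⊔ range N = ⊤) : c = 0 := by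
  have hrange : range c = (range c).map N :=
    calc range c = (range P ⊔ range N).map c := by rw [hPN, Submodule.map_top]
      _ = range (c ∘ₗ N) := by
        rw [Submodule.map_sup, ← range_comp, ← range_comp, hcP, range_zero, bot_sup_eq]
      _ = (range c).map N := by
        rw [← Module.End.mul_eq_comp, hcN.eq, Module.End.mul_eq_comp, range_comp]
  exact range_eq_bot.mp (Submodule.eq_bot_of_le_map_of_isNilpotent hN hrange.le)

theorem stmt1_general
    (V W : Type*) [AddCommGroup V] [Module ℂ V]
    [AddCommGroup W] [Module ℂ W]
    (N : W →ₗ[ℂ] W) (hN : IsNilpotent N) (P : V →ₗ[ℂ] W)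
    (hst2 : LinearMap.range P ⊔ LinearMap.range N = ⊤)
    (b : W ≃ₗ[ℂ] W)
    (hbN : (b : W →ₗ[ℂ] W) ∘ₗ N = N ∘ₗ (b : W →ₗ[ℂ] W))
    (hbP : (b : W →ₗ[ℂ] W) ∘ₗ P = P) :
    b = LinearEquiv.refl ℂ W := by
  have hcN : Commute ((b : W →ₗ[ℂ] W) - 1) N := Commute.sub_left hbN (Commute.one_left N)
  have hcP : ((b : W →ₗ[ℂ] W) - 1) ∘ₗ P = 0 := by
    rw [LinearMap.sub_comp, hbP, Module.End.one_eq_id, LinearMap.id_comp, sub_self]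
  have hc := LinearMap.eq_zero_of_commute_of_comp_eq_zero hN hcN hcP hst2
  exact LinearEquiv.toLinearMap_injective (sub_eq_zero.mp hc)

/-- if the datum `(V,W,N,Q,P)` is stable (`Ker Q ∩ Ker N = 0`,
`Im P + Im N = W`) with `V ≠ 0` and `N` nilpotent, then any `b ∈ GL(W)` commuting
with `N` and satisfying `Q ∘ b⁻¹ = Q`, `b ∘ P = P` is the identity. -/
theorem stmt1
    (V W : Type*) [AddCommGroup V] [Module ℂ V] [FiniteDimensional ℂ V] [Nontrivial V]
    [AddCommGroup W] [Module ℂ W] [FiniteDimensional ℂ W]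
    (N : W →ₗ[ℂ] W) (hN : IsNilpotent N) (Q : W →ₗ[ℂ] V) (P : V →ₗ[ℂ] W)
    (hst1 : LinearMap.ker Q ⊓ LinearMap.ker N = ⊥)
    (hst2 : LinearMap.range P ⊔ LinearMap.range N = ⊤)
    (b : W ≃ₗ[ℂ] W)
    (hbN : (b : W →ₗ[ℂ] W) ∘ₗ N = N ∘ₗ (b : W →ₗ[ℂ] W))
    (hbQ : Q ∘ₗ (b.symm : W →ₗ[ℂ] W) = Q)
    (hbP : (b : W →ₗ[ℂ] W) ∘ₗ P = P) :
    b = LinearEquiv.refl ℂ W :=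
  stmt1_general V W N hN P hst2 b hbN hbP
end

section
/- Let V, W be finite-dimensional complex vector spaces and N ∈ End(W) nilpotent with N^k = 0. Let Q, Q' : W → V be linear maps such that both Q restricted to Ker N and Q' restricted to Ker N are injective. Then there exist g_0, g_1, …, g_{k-1} ∈ End(V) with g_0 invertible such that Σ_{i=0}^{k-1} g_i ∘ Q ∘ N^i = Q'. -/
/-!
Induct on `m`, making `∑_{i<m} gᵢ ∘ Q ∘ Nⁱ` agree with `Q'` on `ker N^m`. For `m = 1`, `Q` and
`Q'` embed the finite-dimensional space `ker N` into `V`, so they differ by an automorphism `g₀`.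
Passing from `m` to `m + 1` only requires choosing `g_m`: the error `Q' - ∑_{i<m} …` vanishes on
`ker N^m`, while on `ker N^(m+1)` the kernel of `Q ∘ N^m` lies in `ker N^m` (since `N^m` maps
`ker N^(m+1)` into `ker N`, where `Q` is injective), so the error factors through `Q ∘ N^m` there.
-/

open LinearMap

section DivisionRing

variable {K M V V₂ : Type*} [DivisionRing K] [AddCommGroup M] [Module K M]
  [AddCommGroup V] [Module K V] [AddCommGroup V₂] [Module K V₂]

theorem LinearMap.exists_comp_eq_of_ker_le (f : M →ₗ[K] V) (g : M →ₗ[K] V₂)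
    (hfg : ker f ≤ ker g) : ∃ h : V →ₗ[K] V₂, h ∘ₗ f = g := by
  obtain ⟨l, hl⟩ := ((ker f).liftQ f le_rfl).exists_leftInverse_of_injective
    ((ker f).ker_liftQ_eq_bot f le_rfl le_rfl)
  refine ⟨(ker f).liftQ g hfg ∘ₗ l, LinearMap.ext fun x => ?_⟩
  have hx : l (f x) = (ker f).mkQ x := LinearMap.congr_fun hl ((ker f).mkQ x)
  simp [hx]

theorem LinearMap.exists_linearEquiv_comp_eq [FiniteDimensional K M] {A B : M →ₗ[K] V}
    (hA : Function.Injective A) (hB : Function.Injective B) :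
    ∃ e : V ≃ₗ[K] V, e.toLinearMap ∘ₗ A = B := by
  obtain ⟨e, he⟩ := Submodule.exists_linearEquiv_restrict_eq
    ((LinearEquiv.ofInjective A hA).symm ≪≫ₗ LinearEquiv.ofInjective B hB)
  refine ⟨e, LinearMap.ext fun x => ?_⟩
  simpa using (he (LinearEquiv.ofInjective A hA x)).symm

end DivisionRing

section Nilpotent

open Finset

variable {K V W : Type*} [DivisionRing K] [AddCommGroup V] [Module K V]
  [AddCommGroup W] [Module K W] {N : Module.End K W} {Q : W →ₗ[K] V}

theorem mem_ker_pow_of_apply_pow_mem_ker (hQ : Disjoint (ker N) (ker Q)) {m : ℕ} {x : W}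
    (hx : x ∈ ker (N ^ (m + 1))) (hQx : (N ^ m) x ∈ ker Q) : x ∈ ker (N ^ m) :=
  Submodule.disjoint_def.1 hQ _ (by rwa [mem_ker, ← Module.End.mul_apply, ← pow_succ']) hQx

theorem exists_ker_pow_succ_le_ker_sub (hQ : Disjoint (ker N) (ker Q)) {m : ℕ}
    {R : W →ₗ[K] V} (hR : ker (N ^ m) ≤ ker R) :
    ∃ h : Module.End K V, ker (N ^ (m + 1)) ≤ ker (R - h ∘ₗ Q ∘ₗ N ^ m) := by
  set p := ker (N ^ (m + 1))
  obtain ⟨h, hh⟩ := ((Q ∘ₗ N ^ m).domRestrict p).exists_comp_eq_of_ker_le (R.domRestrict p)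
    fun x hx => hR (mem_ker_pow_of_apply_pow_mem_ker hQ x.2 hx)
  refine ⟨h, fun x hx => ?_⟩
  simpa [sub_eq_zero] using (LinearMap.congr_fun hh ⟨x, hx⟩).symm

theorem exists_isUnit_ker_pow_le_ker_sub_sum [FiniteDimensional K W] {Q' : W →ₗ[K] V}
    (hQ : Disjoint (ker N) (ker Q)) (hQ' : Disjoint (ker N) (ker Q')) {m : ℕ} (hm : 1 ≤ m) :
    ∃ g : ℕ → Module.End K V, IsUnit (g 0) ∧
      ker (N ^ m) ≤ ker (Q' - ∑ i ∈ range m, g i ∘ₗ Q ∘ₗ N ^ i) := by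
  induction m, hm using Nat.le_induction with
  | base =>
    obtain ⟨e, he⟩ := exists_linearEquiv_comp_eq (injective_domRestrict_iff.2 hQ)
      (injective_domRestrict_iff.2 hQ')
    refine ⟨fun _ => e, (Module.End.isUnit_iff _).2 e.bijective, fun x hx => ?_⟩
    simpa [sub_eq_zero] using (LinearMap.congr_fun he ⟨x, by simpa using hx⟩).symm
  | succ m hm ih =>
    obtain ⟨g, hg0, hg⟩ := ih
    obtain ⟨h, hh⟩ := exists_ker_pow_succ_le_ker_sub hQ hg
    refine ⟨Function.update g m h, by rwa [Function.update_of_ne (by omega)], ?_⟩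
    have hsum : ∑ i ∈ range (m + 1), Function.update g m h i ∘ₗ Q ∘ₗ N ^ i =
        ∑ i ∈ range m, g i ∘ₗ Q ∘ₗ N ^ i + h ∘ₗ Q ∘ₗ N ^ m := by
      rw [sum_range_succ, Function.update_self]
      congr 1
      exact sum_congr rfl fun i hi => by
        rw [Function.update_of_ne (by simp at hi; omega)]
    rwa [hsum, sub_add_eq_sub_sub]

end Nilpotent

theorem stmt2_general
    (V W : Type*) [AddCommGroup V] [Module ℂ V]
    [AddCommGroup W] [Module ℂ W] [FiniteDimensional ℂ W]
    (k : ℕ) (hk : 0 < k) (N : Module.End ℂ W) (hN : N ^ k = 0)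
    (Q Q' : W →ₗ[ℂ] V)
    (hQ : Function.Injective (Q ∘ₗ (LinearMap.ker N).subtype))
    (hQ' : Function.Injective (Q' ∘ₗ (LinearMap.ker N).subtype)) :
    ∃ g : ℕ → Module.End ℂ V, IsUnit (g 0) ∧
      ∑ i ∈ Finset.range k, (g i) ∘ₗ Q ∘ₗ (N ^ i : Module.End ℂ W) = Q' := by
  obtain ⟨g, hg0, hg⟩ := exists_isUnit_ker_pow_le_ker_sub_sum (injective_domRestrict_iff.1 hQ)
    (injective_domRestrict_iff.1 hQ') hk
  rw [hN, ker_zero, top_le_iff, ker_eq_top, sub_eq_zero] at hg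
  exact ⟨g, hg0, hg.symm⟩

/-- transitivity of the truncated gauge group action on homomorphisms
whose restriction to `Ker N` is injective: if `N^k = 0` and `Q, Q' : W → V` both
restrict injectively to `Ker N`, then there are `g₀,…,g_{k-1} ∈ End(V)` with `g₀`
invertible such that `Σ_{i<k} gᵢ ∘ Q ∘ Nⁱ = Q'`. -/
theorem stmt2
    (V W : Type*) [AddCommGroup V] [Module ℂ V] [FiniteDimensional ℂ V]
    [AddCommGroup W] [Module ℂ W] [FiniteDimensional ℂ W]
    (k : ℕ) (hk : 0 < k) (N : Module.End ℂ W) (hN : N ^ k = 0)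
    (Q Q' : W →ₗ[ℂ] V)
    (hQ : Function.Injective (Q ∘ₗ (LinearMap.ker N).subtype))
    (hQ' : Function.Injective (Q' ∘ₗ (LinearMap.ker N).subtype)) :
    ∃ g : ℕ → Module.End ℂ V, IsUnit (g 0) ∧
      ∑ i ∈ Finset.range k, (g i) ∘ₗ Q ∘ₗ (N ^ i : Module.End ℂ W) = Q' :=
  stmt2_general V W k hk N hN Q Q' hQ hQ'
end

section
/- Let V be a nonzero finite-dimensional complex vector space, k ≥ 1, A_1, …, A_k ∈ End(V). With A_hat, N_hat, Q_hat, P_hat as above, let W := V^{⊕k}/Ker A_hat, and let N, Q, P be the maps induced by N_hat, Q_hat, P_hat on the quotient (using Ker A_hat ⊆ Ker Q_hat and N_hat(Ker A_hat) ⊆ Ker A_hat). Then the induced datum is stable: Ker Q ∩ Ker N = 0 in W and Im P + Im N = W. -/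
/-- The block nilpotent shift on `V^{⊕(k+1)}`. -/
noncomputable def Nhat (V : Type*) [AddCommGroup V] [Module ℂ V] (k : ℕ) :
    (Fin (k + 1) → V) →ₗ[ℂ] (Fin (k + 1) → V) :=
  LinearMap.pi fun i =>
    if h : (i : ℕ) + 1 < k + 1 then LinearMap.proj (⟨(i : ℕ) + 1, h⟩ : Fin (k + 1)) else 0

/-- `Q̂(w₁,…,wₙ) = Σ_j A_{n-j+1} w_j`. -/
noncomputable def Qhat (V : Type*) [AddCommGroup V] [Module ℂ V] (k : ℕ)
    (A : Fin (k + 1) → Module.End ℂ V) : (Fin (k + 1) → V) →ₗ[ℂ] V :=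
  ∑ j : Fin (k + 1), (A j.rev) ∘ₗ LinearMap.proj j

/-- `P̂(v) = (0,…,0,v)`. -/
noncomputable def Phat (V : Type*) [AddCommGroup V] [Module ℂ V] (k : ℕ) :
    V →ₗ[ℂ] (Fin (k + 1) → V) :=
  LinearMap.single ℂ (fun _ => V) (Fin.last k)

/-- The block upper-triangular Toeplitz matrix `Â`. -/
noncomputable def Ahat (V : Type*) [AddCommGroup V] [Module ℂ V] (k : ℕ)
    (A : Fin (k + 1) → Module.End ℂ V) :
    (Fin (k + 1) → V) →ₗ[ℂ] (Fin (k + 1) → V) :=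
  LinearMap.pi fun i => ∑ j : Fin (k + 1),
    if i ≤ j then
      (A ⟨k - ((j : ℕ) - (i : ℕ)), by omega⟩) ∘ₗ LinearMap.proj j
    else 0

section lem
variable (V : Type*) [AddCommGroup V] [Module ℂ V] (k : ℕ) (A : Fin (k + 1) → Module.End ℂ V)

lemma Nhat_apply (w : Fin (k+1) → V) (j : Fin (k+1)) :
    Nhat V k w j = if h : (j:ℕ)+1 < k+1 then w ⟨(j:ℕ)+1, h⟩ else 0 := by
  simp only [Nhat, LinearMap.pi_apply]
  split <;> simp

lemma Ahat_apply (w : Fin (k+1) → V) (i : Fin (k+1)) :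
    Ahat V k A w i = ∑ j : Fin (k+1),
      if i ≤ j then A ⟨k - ((j:ℕ)-(i:ℕ)), by omega⟩ (w j) else 0 := by
  simp only [Ahat, LinearMap.pi_apply, LinearMap.sum_apply]
  refine Finset.sum_congr rfl fun j _ => ?_
  split <;> simp

lemma Ahat_zero (w : Fin (k+1) → V) : Ahat V k A w 0 = Qhat V k A w := by
  rw [Ahat_apply]
  simp only [Qhat, LinearMap.sum_apply, LinearMap.comp_apply, LinearMap.proj_apply]
  refine Finset.sum_congr rfl fun j _ => ?_
  rw [if_pos (Fin.zero_le j)]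
  have hrev : j.rev = (⟨k - ((j:ℕ) - ((0:Fin (k+1)):ℕ)), by omega⟩ : Fin (k+1)) := by
    ext
    simp [Fin.val_rev]
  rw [hrev]

lemma Ahat_succ (w : Fin (k+1) → V) (i : ℕ) (h : i + 1 < k + 1) :
    Ahat V k A w ⟨i+1, h⟩ = Ahat V k A (Nhat V k w) ⟨i, by omega⟩ := by
  rw [Ahat_apply, Ahat_apply]
  rw [Fin.sum_univ_succ, Fin.sum_univ_castSucc]
  have hz : (if (⟨i+1, h⟩ : Fin (k+1)) ≤ 0 then
      A ⟨k - ((0:Fin (k+1)) - (i+1)), by omega⟩ (w 0) else 0) = 0 := by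
    rw [if_neg]
    simp [Fin.le_def]
  have hl : (if (⟨i, by omega⟩ : Fin (k+1)) ≤ Fin.last k then
      A ⟨k - ((Fin.last k : ℕ) - i), by omega⟩ (Nhat V k w (Fin.last k)) else 0) = 0 := by
    rw [Nhat_apply]
    rw [dif_neg (by simp)]
    split <;> simp
  rw [hz, hl, zero_add, add_zero]
  refine Finset.sum_congr rfl fun j _ => ?_
  have hc : ((⟨i+1, h⟩ : Fin (k+1)) ≤ j.succ) ↔ ((⟨i, by omega⟩ : Fin (k+1)) ≤ j.castSucc) := by
    simp [Fin.le_def]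
  rw [Nhat_apply, dif_pos (by simpa using j.isLt)]
  split_ifs with h1 h2 h2
  · have hidx : (⟨k - ((j.succ : ℕ) - (i+1)), by omega⟩ : Fin (k+1)) =
        (⟨k - ((j.castSucc : ℕ) - i), by omega⟩ : Fin (k+1)) := by
      ext
      simp only [Fin.val_succ, Fin.coe_castSucc]
      omega
    have harg : (⟨(j.castSucc : ℕ) + 1, by simpa using j.isLt⟩ : Fin (k+1)) = j.succ := by
      ext
      simp
    rw [hidx, harg]
  · exact absurd (hc.mp h1) h2
  · exact absurd (hc.mpr h2) h1
  · rfl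

end lem


/-- the canonical datum, i.e. the datum induced on
`W := V^{⊕(k+1)} / Ker Â` by `N̂, Q̂, P̂` (using `Ker Â ⊆ Ker Q̂`,
`N̂(Ker Â) ⊆ Ker Â`), is stable: `Ker Q ∩ Ker N = 0` and `Im P + Im N = W`. -/
theorem stmt5 (V : Type*) [AddCommGroup V] [Module ℂ V] [FiniteDimensional ℂ V]
    [Nontrivial V] (k : ℕ) (A : Fin (k + 1) → Module.End ℂ V)
    (h1 : LinearMap.ker (Ahat V k A) ≤ LinearMap.ker (Qhat V k A))
    (h2 : LinearMap.ker (Ahat V k A) ≤ (LinearMap.ker (Ahat V k A)).comap (Nhat V k)) :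
    LinearMap.ker ((LinearMap.ker (Ahat V k A)).liftQ (Qhat V k A) h1) ⊓
      LinearMap.ker (Submodule.mapQ (LinearMap.ker (Ahat V k A))
        (LinearMap.ker (Ahat V k A)) (Nhat V k) h2) = ⊥ ∧
    LinearMap.range ((LinearMap.ker (Ahat V k A)).mkQ ∘ₗ Phat V k) ⊔
      LinearMap.range (Submodule.mapQ (LinearMap.ker (Ahat V k A))
        (LinearMap.ker (Ahat V k A)) (Nhat V k) h2) = ⊤ := by
  set K := LinearMap.ker (Ahat V k A) with hK
  constructor
  · rw [eq_bot_iff]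
    rintro x hx
    rw [Submodule.mem_inf] at hx
    obtain ⟨w, rfl⟩ := K.mkQ_surjective x
    obtain ⟨hQ, hN⟩ := hx
    rw [LinearMap.mem_ker] at hQ hN
    have hQ' : Qhat V k A w = 0 := by
      simpa using hQ
    have hN' : Nhat V k w ∈ K := by
      have := hN
      rw [Submodule.mkQ_apply, Submodule.mapQ_apply] at this
      rwa [Submodule.Quotient.mk_eq_zero] at this
    have hNA : Ahat V k A (Nhat V k w) = 0 := hN'
    have hw : w ∈ K := by
      rw [hK, LinearMap.mem_ker]
      funext i
      rcases i with ⟨iv, hi⟩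
      match iv with
      | 0 =>
        have : (⟨0, hi⟩ : Fin (k+1)) = 0 := rfl
        rw [this, Ahat_zero, hQ']
        rfl
      | n + 1 =>
        rw [Ahat_succ V k A w n hi, hNA]
        rfl
    simpa [Submodule.Quotient.mk_eq_zero] using hw
  · rw [eq_top_iff]
    rintro x -
    obtain ⟨w, rfl⟩ := K.mkQ_surjective x
    set u : Fin (k+1) → V := fun i => if h : (i:ℕ) ≠ 0 then w ⟨(i:ℕ)-1, by omega⟩ else 0 with hu
    have hdecomp : w = Phat V k (w (Fin.last k)) + Nhat V k u := by
      funext i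
      simp only [Pi.add_apply]
      rw [Nhat_apply]
      rcases eq_or_ne i (Fin.last k) with h | h
      · subst h
        rw [dif_neg (by simp)]
        simp [Phat, LinearMap.single_apply]
      · have hi : (i:ℕ) + 1 < k + 1 := by
          rcases Fin.lt_last_iff_ne_last.mpr h with hlt
          have := hlt
          simp [Fin.lt_def] at this
          omega
        rw [dif_pos hi]
        have : u ⟨(i:ℕ)+1, hi⟩ = w i := by
          rw [hu]
          simp
        rw [this]
        simp [Phat, LinearMap.single_apply, h]
    rw [Submodule.mem_sup]
    refine ⟨K.mkQ (Phat V k (w (Fin.last k))), ⟨w (Fin.last k), rfl⟩,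
      Submodule.mapQ K K (Nhat V k) h2 (K.mkQ u), LinearMap.mem_range_self _ _, ?_⟩
    rw [Submodule.mkQ_apply K u, Submodule.mapQ_apply, ← Submodule.mkQ_apply K, ← map_add]
    exact congrArg K.mkQ hdecomp.symm
end

section
/- Let V, W be finite-dimensional complex vector spaces, N ∈ End(W) with N^k = 0, and let g(z) = Σ_{i=0}^{k-1} g_i z^i be an invertible element of End(V)[z]/(z^k) with inverse g^{-1}(z) = Σ_{i=0}^{k-1} h_i z^i. For (Q,P) ∈ Hom(W,V) ⊕ Hom(V,W), define g·Q := Σ_i g_i Q N^i and g·P := Σ_i N^i P h_i. Then for every X ∈ End(W) commuting with N, one has tr((g·P)(g·Q) X) = tr(PQX). -/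
/-!
Expanding both sums, the `(i, j)` term is `tr(Nⁱ P hᵢ g_j Q Nʲ X)`, which by cyclicity of the trace and
`[X, N] = 0` equals `tr_V(hᵢ g_j R_{i+j})` with `R_m = Q Nᵐ X P`. Since `R_m = 0` for `m ≥ k`, grouping
by `m = i + j` gives `Σ_{m<k} tr((Σ_{i+j=m} hᵢ g_j) R_m)`, and the inverse relations leave only
`tr(R₀) = tr(PQX)`.
-/

open Finset

theorem LinearMap.sum_comp {R M N P ι : Type*} [CommSemiring R] [AddCommMonoid M]
    [AddCommMonoid N] [AddCommMonoid P] [Module R M] [Module R N] [Module R P]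
    (s : Finset ι) (f : ι → N →ₗ[R] P) (g : M →ₗ[R] N) :
    (∑ i ∈ s, f i) ∘ₗ g = ∑ i ∈ s, f i ∘ₗ g := by
  ext x
  simp [LinearMap.sum_apply]

theorem LinearMap.comp_sum {R M N P ι : Type*} [CommSemiring R] [AddCommMonoid M]
    [AddCommMonoid N] [AddCommMonoid P] [Module R M] [Module R N] [Module R P]
    (s : Finset ι) (g : N →ₗ[R] P) (f : ι → M →ₗ[R] N) :
    g ∘ₗ ∑ i ∈ s, f i = ∑ i ∈ s, g ∘ₗ f i := by
  ext x
  simp [LinearMap.sum_apply]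

theorem sum_range_sum_range_eq_sum_range_diag {M : Type*} [AddCommMonoid M] (k : ℕ)
    (f : ℕ → ℕ → M) (hf : ∀ i j, k ≤ i + j → f i j = 0) :
    ∑ i ∈ range k, ∑ j ∈ range k, f i j = ∑ m ∈ range k, ∑ i ∈ range (m + 1), f i (m - i) := by
  rw [sum_range_diag_flip]
  refine sum_congr rfl fun i _ => (sum_subset (range_subset_range.2 (Nat.sub_le k i)) ?_).symm
  intro j _ hj
  exact hf i j (by simp only [mem_range, not_lt] at hj; omega)

theorem sum_range_sum_range_mul_mul_eq_sum_range_diag {A : Type*} [Semiring A] (k : ℕ)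
    (a b R : ℕ → A) (hR : ∀ m, k ≤ m → R m = 0) :
    ∑ i ∈ range k, ∑ j ∈ range k, a i * b j * R (i + j) =
      ∑ m ∈ range k, (∑ i ∈ range (m + 1), a i * b (m - i)) * R m := by
  rw [sum_range_sum_range_eq_sum_range_diag k _ fun i j hij => by rw [hR _ hij, mul_zero]]
  refine sum_congr rfl fun m _ => ?_
  rw [sum_mul]
  refine sum_congr rfl fun i hi => ?_
  rw [Nat.add_sub_cancel' (Nat.lt_succ_iff.1 (mem_range.1 hi))]

theorem LinearMap.trace_pow_comp_comp_pow_comp {R V W : Type*} [CommRing R]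
    [AddCommGroup V] [Module R V] [Module.Free R V] [Module.Finite R V]
    [AddCommGroup W] [Module R W] [Module.Free R W] [Module.Finite R W]
    {N X : Module.End R W} (hX : Commute X N) (i j : ℕ)
    (Q : W →ₗ[R] V) (P : V →ₗ[R] W) (a b : Module.End R V) :
    trace R W (((N ^ i : Module.End R W) ∘ₗ P ∘ₗ a) ∘ₗ (b ∘ₗ Q ∘ₗ (N ^ j : Module.End R W)) ∘ₗ X) =
      trace R V (a * b * (Q ∘ₗ (N ^ (i + j) * X : Module.End R W) ∘ₗ P)) := by
  have hpow : N ^ j * X * N ^ i = N ^ (i + j) * X := by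
    rw [mul_assoc, (hX.pow_right i).eq, ← mul_assoc, ← pow_add, add_comm]
  calc trace R W (((N ^ i : Module.End R W) ∘ₗ P ∘ₗ a) ∘ₗ (b ∘ₗ Q ∘ₗ (N ^ j : Module.End R W)) ∘ₗ X)
      = trace R W (P ∘ₗ a ∘ₗ b ∘ₗ Q ∘ₗ (N ^ j * X * N ^ i : Module.End R W)) :=
        trace_comp_comm' (P ∘ₗ a ∘ₗ b ∘ₗ Q ∘ₗ (N ^ j : Module.End R W) ∘ₗ X) (N ^ i)
    _ = trace R V (a * b * (Q ∘ₗ (N ^ j * X * N ^ i : Module.End R W) ∘ₗ P)) :=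
        trace_comp_comm' _ P
    _ = _ := by rw [hpow]

theorem stmt8_general
    (V W : Type*) [AddCommGroup V] [Module ℂ V] [FiniteDimensional ℂ V]
    [AddCommGroup W] [Module ℂ W] [FiniteDimensional ℂ W]
    (k : ℕ) (hk : 0 < k) (N : Module.End ℂ W) (hN : N ^ k = 0)
    (g h : ℕ → Module.End ℂ V)
    (hinv1 : ∀ l, l < k →
      ∑ i ∈ Finset.range (l + 1), h i * g (l - i) = if l = 0 then 1 else 0)
    (Q : W →ₗ[ℂ] V) (P : V →ₗ[ℂ] W)
    (X : Module.End ℂ W) (hX : X * N = N * X) :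
    LinearMap.trace ℂ W
      ((∑ i ∈ Finset.range k, ((N ^ i : Module.End ℂ W) : W →ₗ[ℂ] W) ∘ₗ P ∘ₗ (h i)) ∘ₗ
        (∑ i ∈ Finset.range k, (g i) ∘ₗ Q ∘ₗ ((N ^ i : Module.End ℂ W) : W →ₗ[ℂ] W)) ∘ₗ X)
      = LinearMap.trace ℂ W (P ∘ₗ Q ∘ₗ X) := by
  set R : ℕ → Module.End ℂ V := fun m => Q ∘ₗ (N ^ m * X : Module.End ℂ W) ∘ₗ P
  have hR : ∀ m, k ≤ m → R m = 0 := fun m hm => by simp [R, pow_eq_zero_of_le hm hN]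
  calc _ = ∑ i ∈ range k, ∑ j ∈ range k, LinearMap.trace ℂ V (h i * g j * R (i + j)) := by
        rw [LinearMap.sum_comp, LinearMap.sum_comp]
        simp only [LinearMap.comp_sum, map_sum, LinearMap.trace_pow_comp_comp_pow_comp hX, R]
    _ = LinearMap.trace ℂ V (∑ m ∈ range k, (∑ i ∈ range (m + 1), h i * g (m - i)) * R m) := by
        simp only [← sum_range_sum_range_mul_mul_eq_sum_range_diag k h g R hR, map_sum]
    _ = LinearMap.trace ℂ V (R 0) := by
        rw [sum_congr rfl fun m hm => by rw [hinv1 m (mem_range.1 hm)]]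
        simp [hk]
    _ = LinearMap.trace ℂ W (P ∘ₗ Q ∘ₗ X) := by
        simp only [R, pow_zero, one_mul]
        exact (LinearMap.trace_comp_comm' (Q ∘ₗ X) P).symm

/-- invariance of the restricted moment map. If `N^k = 0`, `g(z) = Σ gᵢ zⁱ`
is invertible in `End(V)[z]/(z^k)` with inverse `Σ hᵢ zⁱ`, and the action is
`g·Q = Σ gᵢ Q Nⁱ`, `g·P = Σ Nⁱ P hᵢ`, then for every `X ∈ End(W)` commuting with `N`,
`tr((g·P)(g·Q)X) = tr(PQX)`. -/
theorem stmt8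
    (V W : Type*) [AddCommGroup V] [Module ℂ V] [FiniteDimensional ℂ V]
    [AddCommGroup W] [Module ℂ W] [FiniteDimensional ℂ W]
    (k : ℕ) (hk : 0 < k) (N : Module.End ℂ W) (hN : N ^ k = 0)
    (g h : ℕ → Module.End ℂ V)
    (hinv1 : ∀ l, l < k →
      ∑ i ∈ Finset.range (l + 1), h i * g (l - i) = if l = 0 then 1 else 0)
    (hinv2 : ∀ l, l < k →
      ∑ i ∈ Finset.range (l + 1), g i * h (l - i) = if l = 0 then 1 else 0)
    (Q : W →ₗ[ℂ] V) (P : V →ₗ[ℂ] W)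
    (X : Module.End ℂ W) (hX : X * N = N * X) :
    LinearMap.trace ℂ W
      ((∑ i ∈ Finset.range k, ((N ^ i : Module.End ℂ W) : W →ₗ[ℂ] W) ∘ₗ P ∘ₗ (h i)) ∘ₗ
        (∑ i ∈ Finset.range k, (g i) ∘ₗ Q ∘ₗ ((N ^ i : Module.End ℂ W) : W →ₗ[ℂ] W)) ∘ₗ X)
      = LinearMap.trace ℂ W (P ∘ₗ Q ∘ₗ X) :=
  stmt8_general V W k hk N hN g h hinv1 Q P X hX
end

section
/- Let V, W be finite-dimensional complex vector spaces, N ∈ End(W) with N^k = 0, and g(z) = Σ g_i z^i ∈ G_k(V). Then for all (Q,P) ∈ Hom(W,V) ⊕ Hom(V,W): Ker(g·Q) ∩ Ker N = Ker Q ∩ Ker N and Im(g·P) + Im N = Im P + Im N, where g·Q = Σ_i g_i Q N^i and g·P = Σ_i N^i P (g^{-1})_i. Consequently, the set of stable pairs (Q,P) is invariant under the G_k(V)-action. -/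
/-!
On `Ker N` every term `gᵢ Q Nⁱ` with `i ≥ 1` vanishes, so `g·Q` agrees with `g₀ Q` there; dually
`g·P = P h₀ + N ∘ (…)`, so `g·P` and `P h₀` have the same image modulo `Im N`. Since `h₀ g₀ = 1`, the
map `g₀` is injective and `h₀` is surjective, which removes them from `Ker (g₀ Q)` and `Im (P h₀)`.
-/

namespace LinearMap

section Semiring

variable {R W X : Type*} [Semiring R] [AddCommMonoid W] [Module R W]
  [AddCommMonoid X] [Module R X]

theorem sum_range_succ_comp_pow (F : ℕ → W →ₗ[R] X) (N : Module.End R W) (m : ℕ) :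
    ∑ i ∈ Finset.range (m + 1), F i ∘ₗ (N ^ i) =
      F 0 + (∑ i ∈ Finset.range m, F (i + 1) ∘ₗ (N ^ i)) ∘ₗ N := by
  ext x
  simp [Finset.sum_range_succ', add_comm, pow_succ, Module.End.mul_apply]

theorem sum_range_succ_pow_comp (G : ℕ → X →ₗ[R] W) (N : Module.End R W) (m : ℕ) :
    ∑ i ∈ Finset.range (m + 1), (N ^ i) ∘ₗ G i =
      G 0 + N ∘ₗ ∑ i ∈ Finset.range m, (N ^ i) ∘ₗ G (i + 1) := by
  ext x
  simp [Finset.sum_range_succ', add_comm, pow_succ', Module.End.mul_apply]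

theorem ker_add_comp_inf_ker (A B : W →ₗ[R] X) (N : Module.End R W) :
    ker (A + B ∘ₗ N) ⊓ ker N = ker A ⊓ ker N := by
  ext x
  simp only [Submodule.mem_inf, mem_ker, add_apply, comp_apply]
  constructor <;> rintro ⟨hA, hN⟩ <;> simp_all

theorem ker_sum_comp_pow_inf_ker {k : ℕ} (hk : 0 < k) (F : ℕ → W →ₗ[R] X)
    (N : Module.End R W) :
    ker (∑ i ∈ Finset.range k, F i ∘ₗ (N ^ i)) ⊓ ker N = ker (F 0) ⊓ ker N := by
  obtain ⟨m, rfl⟩ := Nat.exists_eq_add_one_of_ne_zero hk.ne'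
  rw [sum_range_succ_comp_pow, ker_add_comp_inf_ker]

end Semiring

section Ring

variable {R W X : Type*} [Ring R] [AddCommGroup W] [Module R W] [AddCommGroup X] [Module R X]

theorem range_add_comp_sup_range_le (A B : X →ₗ[R] W) (N : Module.End R W) :
    range (A + N ∘ₗ B) ⊔ range N ≤ range A ⊔ range N :=
  sup_le ((range_add_le A _).trans (sup_le_sup_left (range_comp_le_range B N) _)) le_sup_right

theorem range_add_comp_sup_range (A B : X →ₗ[R] W) (N : Module.End R W) :
    range (A + N ∘ₗ B) ⊔ range N = range A ⊔ range N := by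
  refine le_antisymm (range_add_comp_sup_range_le A B N) ?_
  simpa [comp_neg] using range_add_comp_sup_range_le (A + N ∘ₗ B) (-B) N

theorem range_sum_pow_comp_sup_range {k : ℕ} (hk : 0 < k) (G : ℕ → X →ₗ[R] W)
    (N : Module.End R W) :
    range (∑ i ∈ Finset.range k, (N ^ i) ∘ₗ G i) ⊔ range N = range (G 0) ⊔ range N := by
  obtain ⟨m, rfl⟩ := Nat.exists_eq_add_one_of_ne_zero hk.ne'
  rw [sum_range_succ_pow_comp, range_add_comp_sup_range]

end Ring

end LinearMap

open LinearMap

theorem stmt9_general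
    (V W : Type*) [AddCommGroup V] [Module ℂ V]
    [AddCommGroup W] [Module ℂ W]
    (k : ℕ) (hk : 0 < k) (N : Module.End ℂ W)
    (g h : ℕ → Module.End ℂ V)
    (hinv1 : ∀ l, l < k →
      ∑ i ∈ Finset.range (l + 1), h i * g (l - i) = if l = 0 then 1 else 0)
    (Q : W →ₗ[ℂ] V) (P : V →ₗ[ℂ] W) :
    LinearMap.ker (∑ i ∈ Finset.range k,
        (g i) ∘ₗ Q ∘ₗ ((N ^ i : Module.End ℂ W) : W →ₗ[ℂ] W)) ⊓ LinearMap.ker N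
      = LinearMap.ker Q ⊓ LinearMap.ker N ∧
    LinearMap.range (∑ i ∈ Finset.range k,
        ((N ^ i : Module.End ℂ W) : W →ₗ[ℂ] W) ∘ₗ P ∘ₗ (h i)) ⊔ LinearMap.range N
      = LinearMap.range P ⊔ LinearMap.range N ∧
    ((LinearMap.ker Q ⊓ LinearMap.ker N = ⊥ ∧
        LinearMap.range P ⊔ LinearMap.range N = ⊤) →
      (LinearMap.ker (∑ i ∈ Finset.range k,
          (g i) ∘ₗ Q ∘ₗ ((N ^ i : Module.End ℂ W) : W →ₗ[ℂ] W)) ⊓ LinearMap.ker N = ⊥ ∧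
        LinearMap.range (∑ i ∈ Finset.range k,
          ((N ^ i : Module.End ℂ W) : W →ₗ[ℂ] W) ∘ₗ P ∘ₗ (h i)) ⊔ LinearMap.range N = ⊤)) := by
  have hhg : h 0 * g 0 = 1 := by simpa using hinv1 0 hk
  have hker : ker (∑ i ∈ Finset.range k, g i ∘ₗ Q ∘ₗ (N ^ i)) ⊓ ker N = ker Q ⊓ ker N :=
    (ker_sum_comp_pow_inf_ker hk (fun i => g i ∘ₗ Q) N).trans
      (by rw [ker_comp_of_ker_eq_bot Q (ker_eq_bot_of_inverse hhg)])
  have hrange : range (∑ i ∈ Finset.range k, (N ^ i) ∘ₗ P ∘ₗ h i) ⊔ range N =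
      range P ⊔ range N :=
    (range_sum_pow_comp_sup_range hk (fun i => P ∘ₗ h i) N).trans
      (by rw [range_comp_of_range_eq_top P
        (range_eq_top_of_surjective _ (surjective_of_comp_eq_id _ _ hhg))])
  exact ⟨hker, hrange, fun ⟨hQ, hP⟩ => ⟨hker.trans hQ, hrange.trans hP⟩⟩

/-- for `N^k = 0` and `g ∈ G_k(V)` with inverse coefficients `h`,
`Ker(g·Q) ∩ Ker N = Ker Q ∩ Ker N` and `Im(g·P) + Im N = Im P + Im N`; consequently
stability of `(Q,P)` is preserved by the `G_k(V)`-action. -/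
theorem stmt9
    (V W : Type*) [AddCommGroup V] [Module ℂ V] [FiniteDimensional ℂ V]
    [AddCommGroup W] [Module ℂ W] [FiniteDimensional ℂ W]
    (k : ℕ) (hk : 0 < k) (N : Module.End ℂ W) (hN : N ^ k = 0)
    (g h : ℕ → Module.End ℂ V)
    (hinv1 : ∀ l, l < k →
      ∑ i ∈ Finset.range (l + 1), h i * g (l - i) = if l = 0 then 1 else 0)
    (hinv2 : ∀ l, l < k →
      ∑ i ∈ Finset.range (l + 1), g i * h (l - i) = if l = 0 then 1 else 0)
    (Q : W →ₗ[ℂ] V) (P : V →ₗ[ℂ] W) :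
    LinearMap.ker (∑ i ∈ Finset.range k,
        (g i) ∘ₗ Q ∘ₗ ((N ^ i : Module.End ℂ W) : W →ₗ[ℂ] W)) ⊓ LinearMap.ker N
      = LinearMap.ker Q ⊓ LinearMap.ker N ∧
    LinearMap.range (∑ i ∈ Finset.range k,
        ((N ^ i : Module.End ℂ W) : W →ₗ[ℂ] W) ∘ₗ P ∘ₗ (h i)) ⊔ LinearMap.range N
      = LinearMap.range P ⊔ LinearMap.range N ∧
    ((LinearMap.ker Q ⊓ LinearMap.ker N = ⊥ ∧
        LinearMap.range P ⊔ LinearMap.range N = ⊤) →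
      (LinearMap.ker (∑ i ∈ Finset.range k,
          (g i) ∘ₗ Q ∘ₗ ((N ^ i : Module.End ℂ W) : W →ₗ[ℂ] W)) ⊓ LinearMap.ker N = ⊥ ∧
        LinearMap.range (∑ i ∈ Finset.range k,
          ((N ^ i : Module.End ℂ W) : W →ₗ[ℂ] W) ∘ₗ P ∘ₗ (h i)) ⊔ LinearMap.range N = ⊤)) :=
  stmt9_general V W k hk N g h hinv1 Q P
end

section
/- Let V, W be finite-dimensional complex vector spaces and T ∈ End(W), Q : W → V, P : V → W, S ∈ End(V). Assume (V, W, S, T, Q, P) is an irreducible Harnad datum with V ≠ 0. Then the datum (V, W, T, Q, P) is stable. -/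
/-- an irreducible Harnad datum `(V,W,S,T,Q,P)` with `V ≠ 0` has stable
underlying datum `(V,W,T,Q,P)`. Irreducibility: the only pairs of subspaces
`(X,Y)` with `S(X) ⊆ X`, `T(Y) ⊆ Y`, `Q(Y) ⊆ X`, `P(X) ⊆ Y` are `(0,0)` and `(V,W)`.
Stability: for subrepresentations of the datum, `X = 0 ⟹ Y = 0` and `X = V ⟹ Y = W`. -/
theorem stmt10
    (V W : Type*) [AddCommGroup V] [Module ℂ V] [FiniteDimensional ℂ V] [Nontrivial V]
    [AddCommGroup W] [Module ℂ W] [FiniteDimensional ℂ W]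
    (S : Module.End ℂ V) (T : Module.End ℂ W) (Q : W →ₗ[ℂ] V) (P : V →ₗ[ℂ] W)
    (hirr : ∀ (X : Submodule ℂ V) (Y : Submodule ℂ W),
      X.map S ≤ X → Y.map T ≤ Y → Y.map Q ≤ X → X.map P ≤ Y →
      (X = ⊥ ∧ Y = ⊥) ∨ (X = ⊤ ∧ Y = ⊤)) :
    ∀ (X : Submodule ℂ V) (Y : Submodule ℂ W),
      X.map P ≤ Y → Y.map Q ≤ X → Y.map T ≤ Y →
      (X = ⊥ → Y = ⊥) ∧ (X = ⊤ → Y = ⊤) := by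
  intro X Y hP hQ hT
  constructor
  · intro hX0
    subst hX0
    rcases hirr ⊥ Y (by simp) hT (by simpa using hQ) (by simp) with ⟨_, h⟩ | ⟨h, _⟩
    · exact h
    · exact absurd h bot_ne_top
  · intro hXT
    subst hXT
    rcases hirr ⊤ Y le_top hT le_top (by simpa using hP) with ⟨h, _⟩ | ⟨_, h⟩
    · exact absurd h top_ne_bot
    · exact h
end

section
/- Let V, W be nonzero finite-dimensional complex vector spaces, T ∈ End(W) nilpotent, and Q : W → V, P : V → W with datum (V,W,0,T,Q,P) an irreducible Harnad datum (S = 0). If Q P = −λ · Id_V for some λ ≠ 0, then Q is surjective, P is injective, and setting V' := W / Im P with projection Q' : W → V' and P' : V' → W the unique map with P' Q' − P Q = λ Id_W (coming from the splitting −λ^{-1} P Q + λ^{-1} P' Q' = Id_W), one has Q' P' = λ Id_{V'} and dim V' = dim W − dim V. -/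
open Module

/-!
Since `Q ∘ P = -λ • id` with `λ` a unit, `P` is injective and `Q` surjective. The map
`P ∘ Q + λ • id` kills `range P`, so it factors through `W ⧸ range P` as `P'`; composing with
the projection, `mkQ ∘ P' ∘ mkQ = mkQ ∘ (P ∘ Q + λ • id) = λ • mkQ`, because `mkQ ∘ P = 0`.
The dimension count is rank–nullity for the injective map `P`.
-/

namespace LinearMap

variable {R V W : Type*} [CommRing R] [AddCommGroup V] [Module R V] [AddCommGroup W] [Module R W]
  {Q : W →ₗ[R] V} {P : V →ₗ[R] W} {c : R}

theorem bijective_smul_id_of_isUnit (hc : IsUnit c) :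
    Function.Bijective (c • LinearMap.id : V →ₗ[R] V) :=
  (LinearEquiv.smulOfUnit hc.unit).bijective

theorem injective_of_comp_eq_smul_id (hc : IsUnit c) (h : Q ∘ₗ P = c • LinearMap.id) :
    Function.Injective P := by
  have hQP : Function.Injective (Q ∘ P) := by
    rw [← coe_comp, h]
    exact (bijective_smul_id_of_isUnit hc).injective
  exact hQP.of_comp

theorem surjective_of_comp_eq_smul_id (hc : IsUnit c) (h : Q ∘ₗ P = c • LinearMap.id) :
    Function.Surjective Q := by
  have hQP : Function.Surjective (Q ∘ P) := by
    rw [← coe_comp, h]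
    exact (bijective_smul_id_of_isUnit hc).surjective
  exact hQP.of_comp

theorem range_le_ker_comp_add_smul_id (h : Q ∘ₗ P = -c • LinearMap.id) :
    range P ≤ ker (P ∘ₗ Q + c • LinearMap.id) := by
  rintro _ ⟨v, rfl⟩
  have hv : Q (P v) = -c • v := by simpa using LinearMap.congr_fun h v
  simp [hv]

theorem existsUnique_comp_mkQ_eq_comp_add_smul_id (h : Q ∘ₗ P = -c • LinearMap.id) :
    ∃! P' : (W ⧸ range P) →ₗ[R] W, P' ∘ₗ (range P).mkQ = P ∘ₗ Q + c • LinearMap.id :=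
  ⟨(range P).liftQ _ (range_le_ker_comp_add_smul_id h), (range P).liftQ_mkQ _ _,
    fun _ hP' => Submodule.linearMap_qext _ (hP'.trans ((range P).liftQ_mkQ _ _).symm)⟩

theorem mkQ_comp_eq_smul_id_of_comp_mkQ_eq {P' : (W ⧸ range P) →ₗ[R] W}
    (hP' : P' ∘ₗ (range P).mkQ = P ∘ₗ Q + c • LinearMap.id) :
    (range P).mkQ ∘ₗ P' = c • LinearMap.id := by
  refine Submodule.linearMap_qext _ ?_
  calc (range P).mkQ ∘ₗ P' ∘ₗ (range P).mkQ
      = ((range P).mkQ ∘ₗ P) ∘ₗ Q + c • (range P).mkQ := by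
        rw [hP', comp_add, comp_smul, comp_id, comp_assoc]
    _ = (c • LinearMap.id) ∘ₗ (range P).mkQ := by
        rw [range_mkQ_comp, zero_comp, zero_add, smul_comp, id_comp]

end LinearMap

theorem LinearMap.finrank_quotient_range_of_injective {K V W : Type*} [DivisionRing K]
    [AddCommGroup V] [Module K V] [AddCommGroup W] [Module K W] [FiniteDimensional K W]
    {P : V →ₗ[K] W} (hP : Function.Injective P) :
    finrank K (W ⧸ range P) = finrank K W - finrank K V := by
  rw [Submodule.finrank_quotient, finrank_range_of_inj hP]

theorem stmt12_general
    (V W : Type*) [AddCommGroup V] [Module ℂ V]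
    [AddCommGroup W] [Module ℂ W] [FiniteDimensional ℂ W]
    (Q : W →ₗ[ℂ] V) (P : V →ₗ[ℂ] W)
    (lam : ℂ) (hlam : lam ≠ 0)
    (hQP : Q ∘ₗ P = -lam • LinearMap.id) :
    Function.Surjective Q ∧ Function.Injective P ∧
    (∃! P' : (W ⧸ LinearMap.range P) →ₗ[ℂ] W,
        P' ∘ₗ (LinearMap.range P).mkQ = P ∘ₗ Q + lam • LinearMap.id) ∧
    (∀ P' : (W ⧸ LinearMap.range P) →ₗ[ℂ] W,
        P' ∘ₗ (LinearMap.range P).mkQ = P ∘ₗ Q + lam • LinearMap.id →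
        (LinearMap.range P).mkQ ∘ₗ P' = lam • LinearMap.id) ∧
    finrank ℂ (W ⧸ LinearMap.range P) = finrank ℂ W - finrank ℂ V := by
  have hunit : IsUnit (-lam) := (neg_ne_zero.mpr hlam).isUnit
  have hP : Function.Injective P := LinearMap.injective_of_comp_eq_smul_id hunit hQP
  exact ⟨LinearMap.surjective_of_comp_eq_smul_id hunit hQP, hP,
    LinearMap.existsUnique_comp_mkQ_eq_comp_add_smul_id hQP,
    fun _ => LinearMap.mkQ_comp_eq_smul_id_of_comp_mkQ_eq,
    LinearMap.finrank_quotient_range_of_injective hP⟩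

/-- for an irreducible Harnad datum `(V,W,0,T,Q,P)` (with `S = 0`, `T`
nilpotent, `V, W ≠ 0`) satisfying `QP = −λ·Id` with `λ ≠ 0`: `Q` is surjective, `P` is
injective, and with `V' := W/Im P`, `Q' : W → V'` the projection, there is a unique
`P' : V' → W` with `P'Q' − PQ = λ·Id`, any such `P'` satisfies `Q'P' = λ·Id`, and
`dim V' = dim W − dim V`. -/
theorem stmt12
    (V W : Type*) [AddCommGroup V] [Module ℂ V] [FiniteDimensional ℂ V] [Nontrivial V]
    [AddCommGroup W] [Module ℂ W] [FiniteDimensional ℂ W] [Nontrivial W]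
    (T : Module.End ℂ W) (hT : IsNilpotent T)
    (Q : W →ₗ[ℂ] V) (P : V →ₗ[ℂ] W)
    (hirr : ∀ (X : Submodule ℂ V) (Y : Submodule ℂ W),
      Y.map T ≤ Y → Y.map Q ≤ X → X.map P ≤ Y →
      (X = ⊥ ∧ Y = ⊥) ∨ (X = ⊤ ∧ Y = ⊤))
    (lam : ℂ) (hlam : lam ≠ 0)
    (hQP : Q ∘ₗ P = -lam • LinearMap.id) :
    Function.Surjective Q ∧ Function.Injective P ∧
    (∃! P' : (W ⧸ LinearMap.range P) →ₗ[ℂ] W,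
        P' ∘ₗ (LinearMap.range P).mkQ = P ∘ₗ Q + lam • LinearMap.id) ∧
    (∀ P' : (W ⧸ LinearMap.range P) →ₗ[ℂ] W,
        P' ∘ₗ (LinearMap.range P).mkQ = P ∘ₗ Q + lam • LinearMap.id →
        (LinearMap.range P).mkQ ∘ₗ P' = lam • LinearMap.id) ∧
    finrank ℂ (W ⧸ LinearMap.range P) = finrank ℂ W - finrank ℂ V :=
  stmt12_general V W Q P lam hlam hQP
end

section
/- Let V be a finite-dimensional complex vector space and Λ(z) = Σ_{i=1}^{k} Λ_i z^{-i}, Λ'(z) = Σ_{i=1}^{k} Λ'_i z^{-i} two normal forms with the same top index k. If there exists g(z) = Σ_{i=0}^{k-1} g_i z^i ∈ G_k(V) (g_0 invertible) such that Σ_{i=0}^{k-l} (Λ_{l+i} g_i − g_i Λ'_{l+i}) = 0 for l = 1, …, k (i.e., g·Λ = Λ' under the coadjoint action), then there exists a ∈ GL(V) with a Λ_i a^{-1} = Λ'_i for all i = 1, …, k. -/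
/-!
After conjugating `Λ'` by `g₀` we may assume `g₀ = 1`, and then show `Λ_l = Λ'_l` by descending
induction on `l`. Once `Λ_j = Λ'_j` for all `j > l`, the relation at level `l` reads
`Λ_l - Λ'_l = -∑_{j > l} ad_{Λ_j} (g_{j-l})`, while `Λ_l - Λ'_l` commutes with every `Λ_j`, `j > l`.
The operators `ad_{Λ_j}` on `End V` are semisimple and commute, so their common kernel meets the
sum of their ranges only in `0`, which forces `Λ_l = Λ'_l`.
-/

open LinearMap

namespace Module.End

variable {K V : Type*} [Field K] [AddCommGroup V] [Module K V]

lemma IsSemisimple.disjoint_ker_range {f : End K V} (hf : f.IsSemisimple) :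
    Disjoint (ker f) (range f) := by
  rw [Submodule.disjoint_def]
  rintro _ hx ⟨y, rfl⟩
  have hy : y ∈ f.genEigenspace 0 (2 : ℕ) := by
    rw [mem_genEigenspace_nat]
    simpa [sq] using hx
  rw [hf.isFinitelySemisimple.genEigenspace_eq_eigenspace 0 (by norm_num), eigenspace_zero] at hy
  exact hy

lemma IsSemisimple.isCompl_ker_range [FiniteDimensional K V] {f : End K V}
    (hf : f.IsSemisimple) : IsCompl (ker f) (range f) :=
  (Submodule.isCompl_iff_disjoint _ _ (by rw [add_comm, finrank_range_add_finrank_ker])).mpr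
    hf.disjoint_ker_range

lemma disjoint_iInf_ker_iSup_range [FiniteDimensional K V] {ι : Type*} (s : Finset ι)
    {T : ι → End K V} (hs : ∀ i ∈ s, (T i).IsSemisimple)
    (hc : ∀ i ∈ s, ∀ j ∈ s, Commute (T i) (T j)) :
    Disjoint (⨅ i ∈ s, ker (T i)) (⨆ i ∈ s, range (T i)) := by
  classical
  induction s using Finset.induction_on with
  | empty => simp
  | insert a s ha ih =>
    set A := T a
    set N := ⨆ i ∈ s, range (T i)
    have hA := (hs a (s.mem_insert_self a)).isCompl_ker_range
    have hcomm : ∀ i ∈ s, ∀ x, A (T i x) = T i (A x) := fun i hi x =>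
      LinearMap.congr_fun (hc a (s.mem_insert_self a) i (Finset.mem_insert_of_mem hi)).eq x
    -- `ker A` and `range A` are `T i`-invariant and span `V`.
    have hle : ∀ i ∈ s, range (T i) ≤ range A ⊔ (ker A ⊓ N) := by
      intro i hi
      rw [← Submodule.map_top, ← hA.sup_eq_top, Submodule.map_sup]
      refine sup_le (le_sup_of_le_right (le_inf ?_ ?_)) (le_sup_of_le_left ?_)
      · rintro _ ⟨x, hx, rfl⟩
        exact mem_ker.mpr (by rw [hcomm i hi x, mem_ker.mp hx, map_zero])
      · exact LinearMap.map_le_range.trans (le_biSup (fun j => range (T j)) hi)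
      · rintro _ ⟨_, ⟨y, rfl⟩, rfl⟩
        exact ⟨T i y, hcomm i hi y⟩
    have hker : ker A ⊓ (range A ⊔ ker A ⊓ N) = ker A ⊓ N := by
      rw [← inf_sup_assoc_of_le _ inf_le_left, hA.inf_eq_bot, bot_sup_eq]
    rw [Finset.iInf_insert, Finset.iSup_insert]
    refine Disjoint.mono_right (sup_le le_sup_left (iSup₂_le hle)) ?_
    rw [inf_comm, disjoint_iff, inf_assoc, hker, ← disjoint_iff]
    have ih' := ih (fun i hi => hs i (Finset.mem_insert_of_mem hi))
      (fun i hi j hj => hc i (Finset.mem_insert_of_mem hi) j (Finset.mem_insert_of_mem hj))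
    exact ih'.mono_right inf_le_right

end Module.End

theorem Commute.units_conj {M : Type*} [Monoid M] {a b : M} (h : Commute a b) (u : Mˣ) :
    Commute (u * a * ↑u⁻¹) (u * b * ↑u⁻¹) := by
  rw [Commute, SemiconjBy]
  simp only [mul_assoc, Units.inv_mul_cancel_left]
  rw [← mul_assoc a, h.eq, mul_assoc]

/-- `g · Λ = Λ'` for the coadjoint action of `g(z) = ∑ g_i z^i` on `Λ(z) = ∑_{i=1}^k Λ_i z^{-i}`:
the coefficient of `z^{-l}` in `Λ(z) g(z) - g(z) Λ'(z)` vanishes for `l = 1, …, k`. -/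
def CoadjointRelated {A : Type*} [Ring A] (k : ℕ) (g Λ Λ' : ℕ → A) : Prop :=
  ∀ l, 1 ≤ l → l ≤ k →
    ∑ i ∈ Finset.range (k - l + 1), (Λ (l + i) * g i - g i * Λ' (l + i)) = 0

namespace CoadjointRelated

variable {A : Type*} [Ring A] {k : ℕ} {g Λ Λ' : ℕ → A}

theorem mul_units_inv (h : CoadjointRelated k g Λ Λ') (u : Aˣ) :
    CoadjointRelated k (fun i => g i * ↑u⁻¹) Λ (fun i => u * Λ' i * ↑u⁻¹) := by
  intro l hl hlk
  have hsummand : ∀ i, Λ (l + i) * (g i * ↑u⁻¹) - g i * ↑u⁻¹ * (u * Λ' (l + i) * ↑u⁻¹) =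
      (Λ (l + i) * g i - g i * Λ' (l + i)) * ↑u⁻¹ := fun i => by
    simp only [sub_mul, mul_assoc, Units.inv_mul_cancel_left]
  simp only [hsummand, ← Finset.sum_mul, h l hl hlk, zero_mul]

attribute [local instance] LieRing.ofAssociativeRing

open Module Module.End LieAlgebra

variable {K V : Type*} [Field K] [PerfectField K] [AddCommGroup V] [Module K V]
  [FiniteDimensional K V] {h Λ M : ℕ → End K V}

theorem eq_of_apply_zero_eq_one (hrel : CoadjointRelated k h Λ M) (h0 : h 0 = 1)
    (hc : ∀ i j, 1 ≤ i → i ≤ k → 1 ≤ j → j ≤ k → Commute (Λ i) (Λ j))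
    (hcM : ∀ i j, 1 ≤ i → i ≤ k → 1 ≤ j → j ≤ k → Commute (M i) (M j))
    (hs : ∀ i, 2 ≤ i → i ≤ k → (Λ i).IsSemisimple) :
    ∀ l, 1 ≤ l → l ≤ k → Λ l = M l := by
  intro l
  induction l using Nat.strong_decreasing_induction with
  | base => exact ⟨k, fun m hm _ hmk => absurd hmk (by omega)⟩
  | step l ih =>
    intro hl hlk
    set T : ℕ → End K (End K V) := fun i => ad K (End K V) (Λ (l + i + 1))
    have hT : ∀ i x, T i x = Λ (l + i + 1) * x - x * Λ (l + i + 1) := fun i x =>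
      (ad_apply ..).trans (Ring.lie_def _ _)
    have hΛM : ∀ i ∈ Finset.range (k - l), Λ (l + i + 1) = M (l + i + 1) := fun i hi =>
      ih _ (by omega) (by omega) (by simp at hi; omega)
    have hker : Λ l - M l ∈ ⨅ i ∈ Finset.range (k - l), ker (T i) := by
      simp only [Submodule.mem_iInf, mem_ker]
      intro i hi
      have hi' : l + i + 1 ≤ k := by simp at hi; omega
      rw [hT, sub_eq_zero, mul_sub, sub_mul, (hc _ _ (by omega) hi' hl hlk).eq, hΛM i hi,
        (hcM _ _ (by omega) hi' hl hlk).eq]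
    have hrange : Λ l - M l ∈ ⨆ i ∈ Finset.range (k - l), range (T i) := by
      have hsum := hrel l hl hlk
      rw [Finset.sum_range_succ', h0] at hsum
      simp only [add_zero, mul_one, one_mul, ← add_assoc] at hsum
      have hD : Λ l - M l = ∑ i ∈ Finset.range (k - l), T i (-h (i + 1)) := by
        rw [eq_neg_of_add_eq_zero_right hsum, ← Finset.sum_neg_distrib]
        refine Finset.sum_congr rfl fun i hi => ?_
        rw [hT, ← hΛM i hi]
        noncomm_ring
      rw [hD]
      exact Submodule.sum_mem _ fun i hi =>
        le_biSup (fun i => range (T i)) hi (mem_range_self _ _)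
    have hdisj := disjoint_iInf_ker_iSup_range (Finset.range (k - l)) (T := T)
      (fun i hi => ad_isSemisimple_of_isSemisimple (hs _ (by omega) (by simp at hi; omega)))
      (fun i hi j hj => commute_ad_of_commute (hc _ _ (by omega) (by simp at hi; omega)
        (by omega) (by simp at hj; omega)))
    exact sub_eq_zero.mp (Submodule.disjoint_def.mp hdisj _ hker hrange)

end CoadjointRelated

theorem stmt14_general
    (V : Type*) [AddCommGroup V] [Module ℂ V] [FiniteDimensional ℂ V]
    (k : ℕ) (Λ Λ' : ℕ → Module.End ℂ V)
    (hc : ∀ i j, 1 ≤ i → i ≤ k → 1 ≤ j → j ≤ k → Commute (Λ i) (Λ j))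
    (hc' : ∀ i j, 1 ≤ i → i ≤ k → 1 ≤ j → j ≤ k → Commute (Λ' i) (Λ' j))
    (hs : ∀ i, 2 ≤ i → i ≤ k → (Λ i).IsSemisimple)
    (g : ℕ → Module.End ℂ V) (hg0 : IsUnit (g 0))
    (hrel : ∀ l, 1 ≤ l → l ≤ k →
      ∑ i ∈ Finset.range (k - l + 1), (Λ (l + i) * g i - g i * Λ' (l + i)) = 0) :
    ∃ a : (Module.End ℂ V)ˣ, ∀ i, 1 ≤ i → i ≤ k →
      (a : Module.End ℂ V) * Λ i * (↑a⁻¹ : Module.End ℂ V) = Λ' i := by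
  set u := hg0.unit
  have hconj : ∀ i, 1 ≤ i → i ≤ k → Λ i = u * Λ' i * ↑u⁻¹ :=
    (CoadjointRelated.mul_units_inv hrel u).eq_of_apply_zero_eq_one (by simp [u]) hc
      (fun i j hi hik hj hjk => (hc' i j hi hik hj hjk).units_conj u) hs
  refine ⟨u⁻¹, fun i hi hik => ?_⟩
  rw [hconj i hi hik, inv_inv]
  simp only [mul_assoc, Units.inv_mul_cancel_left, Units.inv_mul, mul_one]

/-- two normal forms `Λ(z) = Σ_{i=1}^k Λ_i z^{-i}`, `Λ'(z) = Σ Λ'_i z^{-i}`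
(coefficients pairwise commuting, `Λ_2,…,Λ_k` and `Λ'_2,…,Λ'_k` semisimple) lying in the
same `G_k(V)`-coadjoint orbit (i.e. related by some `g(z) = Σ_{i<k} g_i z^i` with `g_0`
invertible via `Σ_{i=0}^{k-l} (Λ_{l+i} g_i − g_i Λ'_{l+i}) = 0` for `l = 1,…,k`) are
conjugate by a single element `a ∈ GL(V)`. -/
theorem stmt14
    (V : Type*) [AddCommGroup V] [Module ℂ V] [FiniteDimensional ℂ V]
    (k : ℕ) (hk : 0 < k) (Λ Λ' : ℕ → Module.End ℂ V)
    (hc : ∀ i j, 1 ≤ i → i ≤ k → 1 ≤ j → j ≤ k → Commute (Λ i) (Λ j))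
    (hc' : ∀ i j, 1 ≤ i → i ≤ k → 1 ≤ j → j ≤ k → Commute (Λ' i) (Λ' j))
    (hs : ∀ i, 2 ≤ i → i ≤ k → (Λ i).IsSemisimple)
    (hs' : ∀ i, 2 ≤ i → i ≤ k → (Λ' i).IsSemisimple)
    (g : ℕ → Module.End ℂ V) (hg0 : IsUnit (g 0))
    (hrel : ∀ l, 1 ≤ l → l ≤ k →
      ∑ i ∈ Finset.range (k - l + 1), (Λ (l + i) * g i - g i * Λ' (l + i)) = 0) :
    ∃ a : (Module.End ℂ V)ˣ, ∀ i, 1 ≤ i → i ≤ k →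
      (a : Module.End ℂ V) * Λ i * (↑a⁻¹ : Module.End ℂ V) = Λ' i :=
  stmt14_general V k Λ Λ' hc hc' hs g hg0 hrel
end
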